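/- The functor j* : 𝒟 → 𝒟_Φ is left adjoint to the functor j_* : 𝒟_Φ → 𝒟. -/

import Mathlib

open CategoryTheory CategoryTheory.Limits

universe v u

/-- The category `𝒟_Φ`: same objects as `𝒟`; we write `j*x` for the object
corresponding to `x : 𝒟`. -/
structure DPhi (D : Type u) [Category.{v} D] [Preadditive D] (Φinv : D ⥤ D) where
  /-- the underlying object of `𝒟` -/
  base : D

variable {D : Type u} [Category.{v} D] [Preadditive D] [HasBinaryBiproducts D]
  (Φinv : D ⥤ D) [Φinv.Additive]

/-- `𝒟_Φ` as a category: `Hom(j*x, j*y) = Hom(x, y) × Hom(x, Φ⁻¹ y)`, with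
composition `(f, f') ∘ (g, g') = (f ∘ g, f' ∘ g + Φ⁻¹(f) ∘ g')`. -/
instance DPhi.category : Category (DPhi D Φinv) where
  Hom x y := (x.base ⟶ y.base) × (x.base ⟶ Φinv.obj y.base)
  id x := (𝟙 x.base, 0)
  comp p q := (p.1 ≫ q.1, p.1 ≫ q.2 + p.2 ≫ Φinv.map q.1)
  id_comp p := by dsimp; simp
  comp_id p := by dsimp; simp
  assoc p q r := by
    dsimp
    refine Prod.ext (by simp) ?_
    simp [Preadditive.add_comp, Preadditive.comp_add, add_assoc]

/-- The functor `j* : 𝒟 ⥤ 𝒟_Φ`, `x ↦ j*x`, `f ↦ (f, 0)`. -/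
def jStar : D ⥤ DPhi D Φinv where
  obj x := ⟨x⟩
  map f := (f, 0)
  map_id x := rfl
  map_comp f g := by dsimp; simp [CategoryStruct.comp]

/-- The functor `j_* : 𝒟_Φ ⥤ 𝒟`, sending `j*x` to `x ⊕ Φ⁻¹x` and the morphism
`(f, f')` to the upper-triangular matrix `[[f, f'], [0, Φ⁻¹f]]`. -/
noncomputable def jLower : DPhi D Φinv ⥤ D where
  obj x := x.base ⊞ Φinv.obj x.base
  map {x y} p := biprod.desc (biprod.lift p.1 p.2) (biprod.lift 0 (Φinv.map p.1))
  map_id x := by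
    apply biprod.hom_ext' <;> apply biprod.hom_ext <;>
      simp [CategoryStruct.id]
  map_comp {x y z} p q := by
    apply biprod.hom_ext' <;> apply biprod.hom_ext <;>
      simp [CategoryStruct.comp, Preadditive.add_comp, Preadditive.comp_add]
/-!
A morphism `j*x ⟶ y` is a pair `(x ⟶ y, x ⟶ Φ⁻¹ y)`, which by the universal property of the
biproduct is a morphism `x ⟶ y ⊞ Φ⁻¹ y = j_* y`. Postcomposing with `q : y ⟶ y'` multiplies this
column by the upper-triangular matrix `j_* q`, and that product is exactly the composition law of
`𝒟_Φ`; so the bijection is natural and `j* ⊣ j_*`.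
-/

theorem biprod.lift_comp_desc_lift_zero {C : Type*} [Category C] [Preadditive C]
    [HasBinaryBiproducts C] {T X Y X' Y' : C} (a : T ⟶ X) (b : T ⟶ Y) (c : X ⟶ X')
    (d : X ⟶ Y') (e : Y ⟶ Y') :
    biprod.lift a b ≫ biprod.desc (biprod.lift c d) (biprod.lift 0 e) =
      biprod.lift (a ≫ c) (a ≫ d + b ≫ e) := by
  apply biprod.hom_ext <;> simp [Preadditive.add_comp]

namespace DPhi

omit [Φinv.Additive]

omit [HasBinaryBiproducts D] in
theorem jStar_map_comp {x x' : D} {y : DPhi D Φinv} (f : x' ⟶ x) (p : (jStar Φinv).obj x ⟶ y) :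
    (jStar Φinv).map f ≫ p = (f ≫ p.1, f ≫ p.2) := by
  show (f ≫ p.1, f ≫ p.2 + (0 : x' ⟶ Φinv.obj x) ≫ Φinv.map p.1) = _
  rw [zero_comp, add_zero]

noncomputable def jStarHomEquiv (x : D) (y : DPhi D Φinv) :
    ((jStar Φinv).obj x ⟶ y) ≃ (x ⟶ (jLower Φinv).obj y) where
  toFun p := biprod.lift p.1 p.2
  invFun g := (g ≫ biprod.fst, g ≫ biprod.snd)
  left_inv _ := Prod.ext (biprod.lift_fst _ _) (biprod.lift_snd _ _)
  right_inv _ := biprod.hom_ext _ _ (biprod.lift_fst _ _) (biprod.lift_snd _ _)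

theorem jStarHomEquiv_symm_naturality_left {x x' : D} {y : DPhi D Φinv} (f : x' ⟶ x)
    (g : x ⟶ (jLower Φinv).obj y) :
    (jStarHomEquiv Φinv x' y).symm (f ≫ g) =
      (jStar Φinv).map f ≫ (jStarHomEquiv Φinv x y).symm g := by
  rw [jStar_map_comp]
  exact Prod.ext (Category.assoc f g _) (Category.assoc f g _)

theorem jStarHomEquiv_naturality_right {x : D} {y y' : DPhi D Φinv}
    (p : (jStar Φinv).obj x ⟶ y) (q : y ⟶ y') :
    jStarHomEquiv Φinv x y' (p ≫ q) = jStarHomEquiv Φinv x y p ≫ (jLower Φinv).map q :=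
  (biprod.lift_comp_desc_lift_zero p.1 p.2 q.1 q.2 (Φinv.map q.1)).symm

end DPhi

open DPhi in
/-- the functor `j* : 𝒟 ⥤ 𝒟_Φ` is left adjoint to
`j_* : 𝒟_Φ ⥤ 𝒟`. -/
theorem jStar_adj_jLower : Nonempty (jStar Φinv ⊣ jLower Φinv) :=
  ⟨Adjunction.mkOfHomEquiv
    { homEquiv := jStarHomEquiv Φinv
      homEquiv_naturality_left_symm := jStarHomEquiv_symm_naturality_left Φinv
      homEquiv_naturality_right := jStarHomEquiv_naturality_right Φinv }⟩
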